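/- arXiv:2103.01062 — 2 statements merged into one kernel-verified Lean document; each statement's English description precedes it below -/
import Mathlib

section
/- For all real R > 1 and all integers ℓ ≥ 1 and 0 ≤ j ≤ ℓ−1, the inequality (ℓ+1)/(1+ℓR²) + 2 ≥ (ℓ−j)/(1+(ℓ−1−j)R²) + (j+1)/(1+jR²) holds. -/
/-- For real `R > 1` and integers `ℓ ≥ 1`, `0 ≤ j ≤ ℓ−1`:
`(ℓ+1)/(1+ℓR²) + 2 ≥ (ℓ−j)/(1+(ℓ−1−j)R²) + (j+1)/(1+jR²)`. -/
theorem weight_recursion_inequality (R : ℝ) (hR : 1 < R) (ℓ j : ℕ)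
    (hℓ : 1 ≤ ℓ) (hj : j ≤ ℓ - 1) :
    ((ℓ : ℝ) - j) / (1 + ((ℓ : ℝ) - 1 - j) * R ^ 2) + ((j : ℝ) + 1) / (1 + (j : ℝ) * R ^ 2)
      ≤ ((ℓ : ℝ) + 1) / (1 + (ℓ : ℝ) * R ^ 2) + 2 := by
  have hR2 : (1:ℝ) ≤ R ^ 2 := by nlinarith
  have key : ∀ k : ℕ, ((k : ℝ) + 1) / (1 + (k : ℝ) * R ^ 2) ≤ 1 := by
    intro k
    have hk : (0:ℝ) ≤ (k:ℝ) := Nat.cast_nonneg k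
    have hd : (0:ℝ) < 1 + (k : ℝ) * R ^ 2 := by positivity
    rw [div_le_one hd]
    nlinarith [mul_le_mul_of_nonneg_left hR2 hk]
  obtain ⟨m, hm⟩ : ∃ m : ℕ, ℓ = j + m + 1 := by
    refine ⟨ℓ - 1 - j, ?_⟩
    omega
  have hcast : (ℓ : ℝ) = (j : ℝ) + (m : ℝ) + 1 := by
    rw [hm]; push_cast; ring
  have e1 : (ℓ : ℝ) - j = (m : ℝ) + 1 := by rw [hcast]; ring
  have e2 : (ℓ : ℝ) - 1 - j = (m : ℝ) := by rw [hcast]; ring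
  rw [e1, e2]
  have h1 := key m
  have h2 := key j
  have h3 : (0:ℝ) ≤ ((ℓ : ℝ) + 1) / (1 + (ℓ : ℝ) * R ^ 2) := by positivity
  linarith
end

section
/- Let (B_ℓ)_{ℓ≥0} be a sequence of nonnegative continuous functions on [0,T] satisfying B_0(t) ≤ 1 and, for ℓ ≥ 1, B_ℓ(t) ≤ ∫_0^t Σ_{j=0}^{ℓ−1} B_j(s)·B_{ℓ−1−j}(s) ds. Then B_ℓ(t) ≤ C_ℓ·t^ℓ for all ℓ ≥ 0 and t ∈ [0,T], where C_ℓ are the Catalan numbers defined by C_0 = 1 and C_ℓ = Σ_{j=0}^{ℓ−1} C_j·C_{ℓ−1−j}. -/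
open MeasureTheory intervalIntegral

lemma catalan_succ_range (n : ℕ) :
    catalan (n + 1) = ∑ j ∈ Finset.range (n + 1), catalan j * catalan (n - j) := by
  rw [catalan_succ, Finset.sum_range fun j => catalan j * catalan (n - j)]

/-- Catalan-majorant induction lemma: if `B₀(t) ≤ 1` and
`B_ℓ(t) ≤ ∫₀ᵗ Σ_{j<ℓ} B_j(s)B_{ℓ−1−j}(s) ds` for `ℓ ≥ 1`, where the `B_ℓ`
are nonnegative continuous functions on `[0,T]`, then `B_ℓ(t) ≤ C_ℓ t^ℓ`
with `C_ℓ` the Catalan numbers. -/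
theorem catalan_majorant (T : ℝ) (hT : 0 ≤ T) (B : ℕ → ℝ → ℝ)
    (hcont : ∀ ℓ, ContinuousOn (B ℓ) (Set.Icc 0 T))
    (hnonneg : ∀ ℓ, ∀ t ∈ Set.Icc (0 : ℝ) T, 0 ≤ B ℓ t)
    (h0 : ∀ t ∈ Set.Icc (0 : ℝ) T, B 0 t ≤ 1)
    (hrec : ∀ ℓ, 1 ≤ ℓ → ∀ t ∈ Set.Icc (0 : ℝ) T,
      B ℓ t ≤ ∫ s in (0 : ℝ)..t, ∑ j ∈ Finset.range ℓ, B j s * B (ℓ - 1 - j) s) :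
    ∀ ℓ, ∀ t ∈ Set.Icc (0 : ℝ) T, B ℓ t ≤ (catalan ℓ : ℝ) * t ^ ℓ := by
  intro ℓ
  induction ℓ using Nat.strong_induction_on with
  | _ ℓ ih =>
    match ℓ with
    | 0 =>
      intro t ht
      simpa using h0 t ht
    | Nat.succ m =>
      intro t ht
      obtain ⟨ht0, htT⟩ := ht
      have hsub : Set.uIcc (0:ℝ) t ⊆ Set.Icc 0 T := by
        rw [Set.uIcc_of_le ht0]
        exact Set.Icc_subset_Icc le_rfl htT
      have hf_cont : ContinuousOn
          (fun s => ∑ j ∈ Finset.range (m + 1), B j s * B (m + 1 - 1 - j) s)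
          (Set.Icc 0 T) := by
        apply continuousOn_finset_sum
        intro j _
        exact (hcont j).mul (hcont (m + 1 - 1 - j))
      have hf_int : IntervalIntegrable
          (fun s => ∑ j ∈ Finset.range (m + 1), B j s * B (m + 1 - 1 - j) s)
          volume 0 t := (hf_cont.mono hsub).intervalIntegrable
      have hg_int : IntervalIntegrable
          (fun s => (catalan (m + 1) : ℝ) * s ^ m) volume 0 t :=
        (Continuous.intervalIntegrable (by continuity) 0 t)
      have key : B (m + 1) t ≤ ∫ s in (0:ℝ)..t, (catalan (m + 1) : ℝ) * s ^ m := by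
        refine le_trans (hrec (m + 1) (Nat.succ_le_succ (Nat.zero_le m)) t ⟨ht0, htT⟩) ?_
        apply intervalIntegral.integral_mono_on ht0 hf_int hg_int
        intro s hs
        have hsT : s ∈ Set.Icc (0:ℝ) T := ⟨hs.1, hs.2.trans htT⟩
        have hsum : ∑ j ∈ Finset.range (m + 1), B j s * B (m + 1 - 1 - j) s ≤
            ∑ j ∈ Finset.range (m + 1),
              ((catalan j : ℝ) * s ^ j) * ((catalan (m - j) : ℝ) * s ^ (m - j)) := by
          apply Finset.sum_le_sum
          intro j hj
          have hj' : j ≤ m := Nat.lt_succ_iff.mp (Finset.mem_range.mp hj)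
          have e : m + 1 - 1 - j = m - j := by omega
          rw [e]
          exact mul_le_mul (ih j (by omega) s hsT) (ih (m - j) (by omega) s hsT)
            (hnonneg (m - j) s hsT)
            (mul_nonneg (Nat.cast_nonneg _) (pow_nonneg hs.1 j))
        refine hsum.trans ?_
        have : ∀ j ∈ Finset.range (m + 1),
            ((catalan j : ℝ) * s ^ j) * ((catalan (m - j) : ℝ) * s ^ (m - j)) =
            ((catalan j * catalan (m - j) : ℕ) : ℝ) * s ^ m := by
          intro j hj
          have hj' : j ≤ m := Nat.lt_succ_iff.mp (Finset.mem_range.mp hj)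
          push_cast
          rw [show (catalan j : ℝ) * s ^ j * ((catalan (m-j) : ℝ) * s ^ (m - j))
              = (catalan j : ℝ) * (catalan (m-j) : ℝ) * (s ^ j * s ^ (m - j)) by ring,
            ← pow_add, Nat.add_sub_cancel' hj']
        rw [Finset.sum_congr rfl this, ← Finset.sum_mul, ← Nat.cast_sum,
          ← catalan_succ_range]
      refine key.trans ?_
      rw [intervalIntegral.integral_const_mul, integral_pow]
      have h1 : (t ^ (m + 1) - 0 ^ (m + 1)) / (m + 1) ≤ t ^ (m + 1) := by
        rw [zero_pow (Nat.succ_ne_zero m), sub_zero]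
        apply div_le_self (pow_nonneg ht0 _)
        exact_mod_cast Nat.one_le_iff_ne_zero.mpr (Nat.succ_ne_zero m)
      have hc : (0:ℝ) ≤ (catalan (m + 1) : ℝ) := Nat.cast_nonneg _
      calc (catalan (m+1) : ℝ) * ((t ^ (m + 1) - 0 ^ (m + 1)) / (m + 1))
          ≤ (catalan (m+1) : ℝ) * t ^ (m + 1) := by
            exact mul_le_mul_of_nonneg_left h1 hc
end
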